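/- Let ρ be an n×n density matrix whose smallest eigenvalue is zero (a non-faithful state), let A, B be n×n self-adjoint complex matrices, and let q ∈ ℝ with |q| > 1. Then (1/(1+|q|)²)·|Tr[ρ[A₀,B₀]_{|q|}]|² ≤ V_ρ(A)·V_ρ(B). -/

import Mathlib

/-
Write `X = A₀`, `Y = B₀`. Since `ρ`, `X`, `Y` are Hermitian, `Tr[ρYX]` is the complex conjugate of
`Tr[ρXY]`, so the triangle inequality gives `|Tr[ρ[X,Y]_{|q|}]| ≤ (1 + |q|)·|Tr[ρXY]|`. The form
`⟪U, V⟫ = Tr[VρUᴴ]` is a positive semidefinite inner product on matrices, with `Tr[ρXY] = ⟪X, Y⟫`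
and `Tr[ρX²] = V_ρ(A)`, `Tr[ρY²] = V_ρ(B)`; Cauchy–Schwarz gives `|Tr[ρXY]|² ≤ V_ρ(A)·V_ρ(B)`.
-/

open Matrix ComplexOrder

/-- `A₀ = A - Tr[ρA]·I`, the centered operator. -/
noncomputable def shift {n : ℕ} (ρ A : Matrix (Fin n) (Fin n) ℂ) : Matrix (Fin n) (Fin n) ℂ :=
  A - (ρ * A).trace • (1 : Matrix (Fin n) (Fin n) ℂ)

/-- `V_ρ(A) = Tr[ρA²] - (Tr[ρA])²` (a real number for self-adjoint `A` and density `ρ`). -/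
noncomputable def variance {n : ℕ} (ρ A : Matrix (Fin n) (Fin n) ℂ) : ℝ :=
  ((ρ * (A * A)).trace - ((ρ * A).trace) ^ 2).re

/-- the q-commutator `[A,B]_q = AB - q·BA`. -/
noncomputable def qComm {n : ℕ} (q : ℝ) (A B : Matrix (Fin n) (Fin n) ℂ) :
    Matrix (Fin n) (Fin n) ℂ :=
  A * B - (q : ℂ) • (B * A)

/-- the q-anti-commutator `{A,B}_q = AB + q·BA`. -/
noncomputable def qAnti {n : ℕ} (q : ℝ) (A B : Matrix (Fin n) (Fin n) ℂ) :
    Matrix (Fin n) (Fin n) ℂ :=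
  A * B + (q : ℂ) • (B * A)

open scoped InnerProductSpace

lemma Matrix.PosSemidef.norm_trace_mul_mul_sq_le {𝕜 ι : Type*} [RCLike 𝕜] [Fintype ι]
    {ρ : Matrix ι ι 𝕜} (hρ : ρ.PosSemidef) (X Y : Matrix ι ι 𝕜) :
    ‖(ρ * (X * Y)).trace‖ ^ 2 ≤
      RCLike.re (ρ * (X * Xᴴ)).trace * RCLike.re (ρ * (Yᴴ * Y)).trace := by
  let _ := ρ.toMatrixSeminormedAddCommGroup hρ
  let _ := ρ.toMatrixInnerProductSpace hρ
  have hinner : ∀ U V : Matrix ι ι 𝕜, ⟪U, V⟫_𝕜 = (ρ * (Uᴴ * V)).trace := fun U V => by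
    change (V * ρ * Uᴴ).trace = _
    rw [Matrix.mul_assoc, Matrix.trace_mul_comm, Matrix.mul_assoc]
  have hcs := inner_mul_inner_self_le (𝕜 := 𝕜) Xᴴ Y
  rwa [norm_inner_symm Y, ← sq, hinner, hinner, hinner, conjTranspose_conjTranspose] at hcs

section

variable {n : ℕ} {ρ : Matrix (Fin n) (Fin n) ℂ}

lemma star_trace_mul_mul_of_isHermitian (hρ : ρ.IsHermitian) {X Y : Matrix (Fin n) (Fin n) ℂ}
    (hX : X.IsHermitian) (hY : Y.IsHermitian) :
    star (ρ * (X * Y)).trace = (ρ * (Y * X)).trace := by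
  rw [← trace_conjTranspose, conjTranspose_mul, conjTranspose_mul, hρ.eq, hX.eq, hY.eq,
    trace_mul_comm]

lemma isHermitian_shift (hρ : ρ.IsHermitian) {A : Matrix (Fin n) (Fin n) ℂ}
    (hA : A.IsHermitian) : (shift ρ A).IsHermitian := by
  have hreal : star (ρ * A).trace = (ρ * A).trace := by
    simpa using star_trace_mul_mul_of_isHermitian hρ hA isHermitian_one
  rw [shift, IsHermitian, conjTranspose_sub, conjTranspose_smul, conjTranspose_one, hA.eq, hreal]

lemma trace_mul_shift_mul_shift (htr : ρ.trace = 1) (A : Matrix (Fin n) (Fin n) ℂ) :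
    (ρ * (shift ρ A * shift ρ A)).trace = (ρ * (A * A)).trace - (ρ * A).trace ^ 2 := by
  simp only [shift, Matrix.sub_mul, Matrix.mul_sub, Matrix.smul_mul, Matrix.mul_smul,
    Matrix.one_mul, Matrix.mul_one, trace_sub, trace_smul, smul_eq_mul, htr]
  ring

lemma sq_norm_trace_mul_shift_mul_shift_le (hρ : ρ.PosSemidef) (htr : ρ.trace = 1)
    {A B : Matrix (Fin n) (Fin n) ℂ} (hA : A.IsHermitian) (hB : B.IsHermitian) :
    ‖(ρ * (shift ρ A * shift ρ B)).trace‖ ^ 2 ≤ variance ρ A * variance ρ B := by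
  have h := hρ.norm_trace_mul_mul_sq_le (shift ρ A) (shift ρ B)
  rwa [(isHermitian_shift hρ.1 hA).eq, (isHermitian_shift hρ.1 hB).eq,
    trace_mul_shift_mul_shift htr, trace_mul_shift_mul_shift htr] at h

lemma norm_trace_mul_qComm_le (hρ : ρ.IsHermitian) {X Y : Matrix (Fin n) (Fin n) ℂ}
    (hX : X.IsHermitian) (hY : Y.IsHermitian) (q : ℝ) :
    ‖(ρ * qComm q X Y).trace‖ ≤ (1 + |q|) * ‖(ρ * (X * Y)).trace‖ := by
  have hswap : ‖(ρ * (Y * X)).trace‖ = ‖(ρ * (X * Y)).trace‖ := by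
    rw [← star_trace_mul_mul_of_isHermitian hρ hX hY, norm_star]
  calc ‖(ρ * qComm q X Y).trace‖
      = ‖(ρ * (X * Y)).trace - (q : ℂ) * (ρ * (Y * X)).trace‖ := by
        rw [qComm, Matrix.mul_sub, Matrix.mul_smul, trace_sub, trace_smul, smul_eq_mul]
    _ ≤ ‖(ρ * (X * Y)).trace‖ + ‖(q : ℂ) * (ρ * (Y * X)).trace‖ := norm_sub_le _ _
    _ = (1 + |q|) * ‖(ρ * (X * Y)).trace‖ := by
        rw [norm_mul, hswap, Complex.norm_real, Real.norm_eq_abs]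
        ring

end

theorem nonfaithful_qcommutator_uncertainty_general {n : ℕ}
    (ρ A B : Matrix (Fin n) (Fin n) ℂ)
    (hρ : ρ.PosSemidef) (htr : ρ.trace = 1)
    (hA : A.IsHermitian) (hB : B.IsHermitian) (q : ℝ) :
    (1 / (1 + |q|) ^ 2) *
        ‖(ρ * qComm |q| (shift ρ A) (shift ρ B)).trace‖ ^ 2 ≤
      variance ρ A * variance ρ B := by
  have hqComm := norm_trace_mul_qComm_le hρ.1 (isHermitian_shift hρ.1 hA)
    (isHermitian_shift hρ.1 hB) |q|
  rw [abs_abs] at hqComm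
  calc (1 / (1 + |q|) ^ 2) * ‖(ρ * qComm |q| (shift ρ A) (shift ρ B)).trace‖ ^ 2
      ≤ (1 / (1 + |q|) ^ 2) * ((1 + |q|) * ‖(ρ * (shift ρ A * shift ρ B)).trace‖) ^ 2 := by
        gcongr
    _ = ‖(ρ * (shift ρ A * shift ρ B)).trace‖ ^ 2 := by
        field_simp
    _ ≤ variance ρ A * variance ρ B := sq_norm_trace_mul_shift_mul_shift_le hρ htr hA hB

/-- For a non-faithful density matrix (smallest eigenvalue zero) and `|q| > 1`:
`(1/(1+|q|)²)·|Tr[ρ[A₀,B₀]_{|q|}]|² ≤ V_ρ(A)·V_ρ(B)`. -/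
theorem nonfaithful_qcommutator_uncertainty {n : ℕ}
    (ρ A B : Matrix (Fin n) (Fin n) ℂ)
    (hρ : ρ.PosSemidef) (htr : ρ.trace = 1)
    (hzero : ∃ i, hρ.1.eigenvalues i = 0)
    (hA : A.IsHermitian) (hB : B.IsHermitian) (q : ℝ) (hq : 1 < |q|) :
    (1 / (1 + |q|) ^ 2) *
        ‖(ρ * qComm |q| (shift ρ A) (shift ρ B)).trace‖ ^ 2 ≤
      variance ρ A * variance ρ B :=
  nonfaithful_qcommutator_uncertainty_general ρ A B hρ htr hA hB q
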